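/- arXiv:math/0703884 — 3 statements merged into one kernel-verified Lean document; each statement's English description precedes it below -/
import Mathlib

section
/- Let $y, z : [x_0, \infty) \to (0, \infty)$ be $C^2$ functions with $y'(x) \to 0$ as $x \to \infty$ and $z$ bounded, satisfying $y''(x) = \phi(x) y(x)$ and $z''(x) = \psi(x) z(x)$ for continuous functions $\phi \le \psi$, with $y(x_0) = z(x_0)$. Then $z(x) \le y(x)$ for all $x \ge x_0$. -/
open MeasureTheory Real Filter Asymptotics

noncomputable def FT (f : ℝ → ℂ) (ξ : ℝ) : ℂ :=
  (((2 * Real.pi) ^ (-(1:ℝ)/2) : ℝ) : ℂ) * ∫ x : ℝ, f x * Complex.exp (-(Complex.I * ξ * x))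

noncomputable def hermiteFn (n : ℕ) (x : ℝ) : ℝ :=
  ((2 ^ n * n.factorial * Real.sqrt Real.pi : ℝ) ^ (-(1:ℝ)/2)) *
    ((-1 : ℝ) ^ n * Real.exp (x ^ 2) * iteratedDeriv n (fun t => Real.exp (-t ^ 2)) x) *
    Real.exp (-x ^ 2 / 2)

def IsWeight (ω : ℝ → ℝ) : Prop :=
  Continuous ω ∧ Monotone ω ∧ (∀ x, 0 ≤ ω x) ∧
  ConvexOn ℝ Set.univ (fun t => ω (Real.exp t)) ∧
  ((fun t => Real.log t) =o[atTop] ω) ∧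
  (∃ C : ℝ, ∀ᶠ t in atTop, ω (2 * t) ≤ C * ω t) ∧
  Filter.limsup (fun t => ω t / t ^ 2) atTop ≤ 1 / 2

noncomputable def omegaNorm (ω : ℝ → ℝ) (f : ℝ → ℂ) : ℝ :=
  (⨆ x : ℝ, ‖f x‖ * Real.exp (ω |x|)) + (⨆ ξ : ℝ, ‖FT f ξ‖ * Real.exp (ω |ξ|))

def MemSomega (ω : ℝ → ℝ) (f : ℝ → ℂ) : Prop :=
  MemLp f 2 volume ∧
  (∃ C : ℝ, ∀ x, ‖f x‖ ≤ C * Real.exp (-ω |x|)) ∧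
  (∃ C : ℝ, ∀ ξ, ‖FT f ξ‖ ≤ C * Real.exp (-ω |ξ|))

noncomputable def OmegaStar (ω : ℝ → ℝ) (ν : ℝ) : ℝ :=
  ⨆ t : ℝ, ν * t - ω (Real.exp t)

noncomputable def wigner (f : ℝ → ℂ) (q p : ℝ) : ℂ :=
  ((1 / (2 * Real.pi) : ℝ) : ℂ) * ∫ x : ℝ,
    Complex.exp (Complex.I * p * x) * f (q - x / 2) * (starRingEnd ℂ) (f (q + x / 2))

noncomputable def laguerre (n α : ℕ) (x : ℝ) : ℝ :=
  (n.factorial : ℝ)⁻¹ * Real.exp x * x ^ (-(α : ℤ)) *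
    iteratedDeriv n (fun t => Real.exp (-t) * t ^ (n + α)) x

noncomputable def specialHermite (m n : ℕ) (q p : ℝ) : ℂ :=
  ((1 / (2 * Real.pi) : ℝ) : ℂ) * ∫ x : ℝ,
    Complex.exp (Complex.I * p * x) * (hermiteFn m (q - x / 2) : ℂ) * (hermiteFn n (q + x / 2) : ℂ)

noncomputable def lmn (m n : ℕ) (r : ℝ) : ℝ :=
  (2 : ℝ) ^ (((m : ℝ) - n) / 2) / Real.pi * Real.sqrt ((n.factorial : ℝ) / m.factorial) *
    Real.exp (-r ^ 2) * r ^ (m - n) * |laguerre n (m - n) (2 * r ^ 2)|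


/-! The Wronskian `W = z' y - z y'` satisfies `W' = (ψ - φ) z y ≥ 0`, so it is nondecreasing.
If `W` were positive somewhere, it would stay above some `δ > 0`; since `y' → 0` and `z` is
bounded, eventually `z' y ≥ δ / 2` while `y` grows at most linearly. Then `z'` dominates a
multiple of `1 / t`, so `z` grows logarithmically, contradicting boundedness. Hence `W ≤ 0`, i.e.
`(z / y)' = W / y² ≤ 0`, and `z / y` starts at `1`. -/

open Set Topology

lemma tendsto_atTop_of_div_sub_le_deriv {f f' : ℝ → ℝ} {b c X : ℝ} (hc : 0 < c)
    (hbX : b < X) (hf : ContinuousOn f (Ici X)) (hderiv : ∀ t > X, HasDerivAt f (f' t) t)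
    (hle : ∀ t > X, c / (t - b) ≤ f' t) : Tendsto f atTop atTop := by
  set g : ℝ → ℝ := fun t => c * Real.log (t - b)
  have hg : ∀ t > b, HasDerivAt g (c / (t - b)) t := fun t ht => by
    simpa [g, div_eq_mul_inv] using
      (((hasDerivAt_id t).sub_const b).log (sub_pos.2 ht).ne').const_mul c
  have hmono : MonotoneOn (fun t => f t - g t) (Ici X) := by
    refine monotoneOn_of_hasDerivWithinAt_nonneg (f' := fun t => f' t - c / (t - b)) (convex_Ici X)
      (hf.sub fun t ht => (hg t (hbX.trans_le ht)).continuousAt.continuousWithinAt)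
      (fun t ht => ?_) fun t ht => ?_ <;> rw [interior_Ici] at ht
    · exact ((hderiv t ht).sub (hg t (hbX.trans ht))).hasDerivWithinAt
    · exact sub_nonneg.2 (hle t ht)
  have hg_top : Tendsto g atTop atTop :=
    (tendsto_log_atTop.comp (tendsto_atTop_add_const_right _ (-b) tendsto_id)).const_mul_atTop hc
  refine tendsto_atTop_mono' atTop ?_ (tendsto_atTop_add_const_left _ (f X - g X) hg_top)
  filter_upwards [eventually_ge_atTop X] with t ht
  have := hmono self_mem_Ici ht ht
  dsimp only at this
  linarith

section Wronskian

variable {y z y' z' : ℝ → ℝ} {a : ℝ}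

lemma monotoneOn_wronskian {φ ψ : ℝ → ℝ}
    (hy : ∀ t > a, HasDerivAt y (y' t) t) (hz : ∀ t > a, HasDerivAt z (z' t) t)
    (hy' : ∀ t > a, HasDerivAt y' (φ t * y t) t) (hz' : ∀ t > a, HasDerivAt z' (ψ t * z t) t)
    (hle : ∀ t > a, φ t ≤ ψ t) (hzy : ∀ t > a, 0 ≤ z t * y t) :
    MonotoneOn (fun t => z' t * y t - z t * y' t) (Ioi a) := by
  have hW : ∀ t > a,
      HasDerivAt (fun t => z' t * y t - z t * y' t) ((ψ t - φ t) * (z t * y t)) t :=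
    fun t ht => (((hz' t ht).mul (hy t ht)).sub ((hz t ht).mul (hy' t ht))).congr_deriv (by ring)
  refine monotoneOn_of_hasDerivWithinAt_nonneg (convex_Ioi a)
    (f' := fun t => (ψ t - φ t) * (z t * y t))
    (fun t ht => (hW t ht).continuousAt.continuousWithinAt) (fun t ht => ?_) fun t ht => ?_ <;>
    rw [interior_Ioi] at ht
  · exact (hW t ht).hasDerivWithinAt
  · exact mul_nonneg (sub_nonneg.2 (hle t ht)) (hzy t ht)

lemma wronskian_nonpos_of_tendsto_deriv_zero {M : ℝ}
    (hy : ∀ t > a, HasDerivAt y (y' t) t) (hz : ∀ t > a, HasDerivAt z (z' t) t)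
    (hypos : ∀ t > a, 0 < y t) (hzpos : ∀ t > a, 0 < z t) (hzM : ∀ t > a, z t ≤ M)
    (hy'_lim : Tendsto y' atTop (𝓝 0))
    (hW : MonotoneOn (fun t => z' t * y t - z t * y' t) (Ioi a)) :
    ∀ t > a, z' t * y t - z t * y' t ≤ 0 := by
  by_contra! ⟨x₁, hx₁, hδ⟩
  set δ := z' x₁ * y x₁ - z x₁ * y' x₁
  have habs : Tendsto (fun t => |y' t|) atTop (𝓝 0) := by simpa using hy'_lim.abs
  have hMabs : Tendsto (fun t => M * |y' t|) atTop (𝓝 0) := by simpa using habs.const_mul M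
  obtain ⟨X, hX⟩ := eventually_atTop.1 <| (eventually_ge_atTop x₁).and <|
    (habs.eventually_lt_const one_pos).and (hMabs.eventually_lt_const (half_pos hδ))
  have hXa : a < X := hx₁.trans_le (hX X le_rfl).1
  have hta : ∀ t ≥ X, a < t := fun t ht => hXa.trans_le ht
  have hz'y : ∀ t ≥ X, δ / 2 < z' t * y t := fun t ht => by
    have hWt : δ ≤ z' t * y t - z t * y' t := hW hx₁ (hta t ht) (hX t ht).1
    have hzy' : z t * |y' t| ≤ M * |y' t| :=
      mul_le_mul_of_nonneg_right (hzM t (hta t ht)) (abs_nonneg _)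
    have hzy'_ge : -(z t * |y' t|) ≤ z t * y' t := by
      rw [← mul_neg]
      exact mul_le_mul_of_nonneg_left (neg_abs_le _) (hzpos t (hta t ht)).le
    linarith [(hX t ht).2.2]
  have hy_lin : ∀ t ≥ X, y t - y X ≤ 1 * (t - X) := fun t ht =>
    (convex_Ici X).image_sub_le_mul_sub_of_deriv_le
      (fun s hs => (hy s (hta s hs)).continuousAt.continuousWithinAt)
      (fun s hs => (hy s (hta s (interior_subset hs))).differentiableAt.differentiableWithinAt)
      (fun s hs => by
        rw [interior_Ici] at hs
        rw [(hy s (hta s hs.le)).deriv]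
        exact (le_abs_self _).trans (hX s hs.le).2.1.le)
      X self_mem_Ici t ht ht
  have hz_top : Tendsto z atTop atTop := by
    refine tendsto_atTop_of_div_sub_le_deriv (half_pos hδ) (sub_lt_self X (hypos X hXa))
      (fun t ht => (hz t (hta t ht)).continuousAt.continuousWithinAt)
      (fun t ht => hz t (hta t ht.le)) fun t ht => ?_
    have hyt := hypos t (hta t ht.le)
    calc δ / 2 / (t - (X - y X)) ≤ δ / 2 / y t := by
          gcongr
          linarith [hy_lin t ht.le]
      _ ≤ z' t := by
          rw [div_le_iff₀ hyt]
          exact (hz'y t ht.le).le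
  obtain ⟨t, htM, hta'⟩ := ((hz_top.eventually_gt_atTop M).and (eventually_gt_atTop a)).exists
  exact (hzM t hta').not_gt htM

lemma antitoneOn_div_of_wronskian_nonpos (hyc : ContinuousOn y (Ici a))
    (hzc : ContinuousOn z (Ici a)) (hy : ∀ t > a, HasDerivAt y (y' t) t)
    (hz : ∀ t > a, HasDerivAt z (z' t) t) (hy0 : ∀ t ≥ a, y t ≠ 0)
    (hW : ∀ t > a, z' t * y t - z t * y' t ≤ 0) :
    AntitoneOn (fun t => z t / y t) (Ici a) := by
  refine antitoneOn_of_hasDerivWithinAt_nonpos (convex_Ici a) (hzc.div hyc hy0)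
    (f' := fun t => (z' t * y t - z t * y' t) / y t ^ 2)
    (fun t ht => ?_) fun t ht => ?_ <;> rw [interior_Ici] at ht
  · exact ((hz t ht).div (hy t ht) (hy0 t ht.le)).hasDerivWithinAt
  · exact div_nonpos_of_nonpos_of_nonneg (hW t ht) (sq_nonneg _)

end Wronskian

theorem stmt0_general (x0 : ℝ) (y z φ ψ : ℝ → ℝ)
    (hy : ContDiffOn ℝ 2 y (Set.Ici x0)) (hz : ContDiffOn ℝ 2 z (Set.Ici x0))
    (hypos : ∀ x ≥ x0, 0 < y x) (hzpos : ∀ x ≥ x0, 0 < z x)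
    (hyd : Filter.Tendsto (deriv y) Filter.atTop (nhds 0))
    (hzbdd : ∃ M : ℝ, ∀ x ≥ x0, z x ≤ M)
    (hle : ∀ x ≥ x0, φ x ≤ ψ x)
    (hyode : ∀ x ≥ x0, deriv (deriv y) x = φ x * y x)
    (hzode : ∀ x ≥ x0, deriv (deriv z) x = ψ x * z x)
    (hinit : y x0 = z x0) :
    ∀ x ≥ x0, z x ≤ y x := by
  obtain ⟨M, hzM⟩ := hzbdd
  have hC2 : ∀ {f : ℝ → ℝ}, ContDiffOn ℝ 2 f (Ici x0) → ∀ t > x0,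
      HasDerivAt f (deriv f t) t ∧ HasDerivAt (deriv f) (deriv (deriv f) t) t := fun hf t ht =>
    have hft := hf.contDiffAt (Ici_mem_nhds ht)
    ⟨(hft.differentiableAt (by norm_num)).hasDerivAt,
      ((hft.derivWithin (m := 1) (by norm_num)).differentiableAt (by norm_num)).hasDerivAt⟩
  have hy1 := fun t ht => (hC2 hy t ht).1
  have hz1 := fun t ht => (hC2 hz t ht).1
  have hW := monotoneOn_wronskian hy1 hz1
    (fun t ht => hyode t ht.le ▸ (hC2 hy t ht).2) (fun t ht => hzode t ht.le ▸ (hC2 hz t ht).2)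
    (fun t ht => hle t ht.le) fun t ht => (mul_pos (hzpos t ht.le) (hypos t ht.le)).le
  have hW_nonpos := wronskian_nonpos_of_tendsto_deriv_zero hy1 hz1 (fun t ht => hypos t ht.le)
    (fun t ht => hzpos t ht.le) (fun t ht => hzM t ht.le) hyd hW
  have hratio := antitoneOn_div_of_wronskian_nonpos hy.continuousOn hz.continuousOn hy1 hz1
    (fun t ht => (hypos t ht).ne') hW_nonpos
  intro x hx
  have h : z x / y x ≤ z x0 / y x0 := hratio self_mem_Ici hx hx
  rw [← hinit, div_self (hypos x0 le_rfl).ne'] at h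
  exact (div_le_one (hypos x hx)).1 h

theorem stmt0 (x0 : ℝ) (y z φ ψ : ℝ → ℝ)
    (hy : ContDiffOn ℝ 2 y (Set.Ici x0)) (hz : ContDiffOn ℝ 2 z (Set.Ici x0))
    (hypos : ∀ x ≥ x0, 0 < y x) (hzpos : ∀ x ≥ x0, 0 < z x)
    (hyd : Filter.Tendsto (deriv y) Filter.atTop (nhds 0))
    (hzbdd : ∃ M : ℝ, ∀ x ≥ x0, z x ≤ M)
    (hφ : ContinuousOn φ (Set.Ici x0)) (hψ : ContinuousOn ψ (Set.Ici x0))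
    (hle : ∀ x ≥ x0, φ x ≤ ψ x)
    (hyode : ∀ x ≥ x0, deriv (deriv y) x = φ x * y x)
    (hzode : ∀ x ≥ x0, deriv (deriv z) x = ψ x * z x)
    (hinit : y x0 = z x0) :
    ∀ x ≥ x0, z x ≤ y x :=
  stmt0_general x0 y z φ ψ hy hz hypos hzpos hyd hzbdd hle hyode hzode hinit
end

section
/- The $n$-th Hermite function is an eigenfunction of the Fourier transform with eigenvalue $(-i)^n$: $\widehat{h_n} = (-i)^n h_n$. -/
open MeasureTheory Real Filter Asymptotics

/-!
Write `g_p(x) = p(x) e^{-x²/2}` for a real polynomial `p`. By Rodrigues' formula,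
`h_n = c_n g_{H_n}` with the physicists' Hermite polynomials `H_{n+1} = 2X H_n - H_n'`, and this
recursion says exactly that `g_{H_{n+1}} = x g_{H_n} - g_{H_n}'`. The Fourier transform turns
multiplication by `x` into `i d/dξ` and `d/dx` into multiplication by `iξ`, so the creation operator
`f ↦ x f - f'` maps an eigenfunction with eigenvalue `c` to one with eigenvalue `-i c`. The
induction starts from the Gaussian, which is its own Fourier transform.
-/

open Polynomial Complex FourierTransform

lemma FT_eq_fourier (f : ℝ → ℂ) (ξ : ℝ) :
    FT f ξ = (((2 * π) ^ (-(1:ℝ)/2) : ℝ) : ℂ) * 𝓕 f (ξ / (2 * π)) := by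
  rw [FT, Real.fourier_real_eq_integral_exp_smul]
  congr 1
  refine integral_congr_ae (ae_of_all _ fun x => ?_)
  have hπ : (π : ℂ) ≠ 0 := ofReal_ne_zero.2 pi_ne_zero
  simp only [smul_eq_mul]
  rw [mul_comm]
  congr 2
  push_cast
  field_simp

lemma FT_smul (c : ℂ) (f : ℝ → ℂ) : FT (c • f) = c • FT f := by
  ext ξ
  simp only [FT, Pi.smul_apply, smul_eq_mul, mul_assoc, integral_const_mul]
  ring

lemma integrable_mul_exp_neg_I_mul {f : ℝ → ℂ} (hf : Integrable f) (ξ : ℝ) :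
    Integrable fun x : ℝ => f x * exp (-(I * ξ * x)) :=
  hf.mul_bdd (c := 1) (by fun_prop) (ae_of_all _ fun x => le_of_eq <| by
    rw [norm_exp, show -(I * ξ * x) = ((-(ξ * x) : ℝ) : ℂ) * I by push_cast; ring]
    simp)

lemma FT_sub {f g : ℝ → ℂ} (hf : Integrable f) (hg : Integrable g) :
    FT (f - g) = FT f - FT g := by
  ext ξ
  simp only [FT, Pi.sub_apply, sub_mul,
    integral_sub (integrable_mul_exp_neg_I_mul hf ξ) (integrable_mul_exp_neg_I_mul hg ξ), mul_sub]

lemma FT_deriv {f : ℝ → ℂ} (hf : Integrable f) (hdf : Differentiable ℝ f)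
    (hf' : Integrable (deriv f)) (ξ : ℝ) :
    FT (deriv f) ξ = I * ξ * FT f ξ := by
  have hπ : (π : ℂ) ≠ 0 := ofReal_ne_zero.2 pi_ne_zero
  rw [FT_eq_fourier, FT_eq_fourier, Real.fourier_deriv hf hdf hf']
  simp only [smul_eq_mul]
  push_cast
  field_simp

lemma hasDerivAt_FT {f : ℝ → ℂ} (hf : Integrable f) (hxf : Integrable fun x : ℝ => x • f x)
    (ξ : ℝ) : HasDerivAt (FT f) (-I * FT (fun x : ℝ => x • f x) ξ) ξ := by
  have hπ : (π : ℂ) ≠ 0 := ofReal_ne_zero.2 pi_ne_zero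
  have hscale : HasDerivAt (fun ξ : ℝ => ξ / (2 * π)) (1 / (2 * π)) ξ := by
    simpa using (hasDerivAt_id ξ).div_const (2 * π)
  have h := ((Real.hasDerivAt_fourier hf hxf (ξ / (2 * π))).scomp ξ hscale).const_mul
    ((((2 * π) ^ (-(1:ℝ)/2) : ℝ) : ℂ))
  rw [show (fun ξ => (((2 * π) ^ (-(1:ℝ)/2) : ℝ) : ℂ) * (𝓕 f ∘ fun ξ : ℝ => ξ / (2 * π)) ξ)
      = FT f from funext fun ξ => (FT_eq_fourier f ξ).symm] at h
  refine h.congr_deriv ?_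
  have hsmul : (fun x : ℝ => (-2 * π * I * x) • f x) = (-2 * π * I : ℂ) • fun x : ℝ => x • f x := by
    ext x
    simp only [Pi.smul_apply, smul_eq_mul, real_smul]
    ring
  have hconst : 𝓕 ((-2 * π * I : ℂ) • fun x : ℝ => x • f x) (ξ / (2 * π))
      = (-2 * π * I : ℂ) * 𝓕 (fun x : ℝ => x • f x) (ξ / (2 * π)) :=
    congrFun (VectorFourier.fourierIntegral_const_smul _ _ _ _ _) _
  rw [FT_eq_fourier, hsmul, hconst, real_smul]
  push_cast
  field_simp

lemma FT_gaussian :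
    FT (fun x => ((Real.exp (-x ^ 2 / 2) : ℝ) : ℂ))
      = fun ξ => ((Real.exp (-ξ ^ 2 / 2) : ℝ) : ℂ) := by
  ext ξ
  have hintegrand : (fun x : ℝ => ((Real.exp (-x ^ 2 / 2) : ℝ) : ℂ) * exp (-(I * ξ * x)))
      = fun x : ℝ => exp (I * (-ξ : ℂ) * x) * exp (-((1 / 2 : ℝ) : ℂ) * x ^ 2) := by
    ext x
    rw [ofReal_exp, ← Complex.exp_add, ← Complex.exp_add]
    push_cast
    ring_nf
  have hsqrt : ((π : ℂ) / ((1 / 2 : ℝ) : ℂ)) ^ (1 / 2 : ℂ) = (((2 * π) ^ ((1:ℝ)/2) : ℝ) : ℂ) := by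
    rw [show (π : ℂ) / ((1 / 2 : ℝ) : ℂ) = ((2 * π : ℝ) : ℂ) by push_cast; ring,
      show (1 / 2 : ℂ) = ((1 / 2 : ℝ) : ℂ) by norm_num, ← ofReal_cpow (by positivity)]
  have hnorm : (2 * π) ^ (-(1:ℝ)/2) * (2 * π) ^ ((1:ℝ)/2) = 1 := by
    rw [← Real.rpow_add (by positivity)]
    norm_num
  rw [FT, hintegrand, fourierIntegral_gaussian (by norm_num) (-ξ : ℂ), hsqrt, ← mul_assoc,
    ← ofReal_mul, hnorm, ofReal_one, one_mul, ofReal_exp]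
  push_cast
  ring_nf

noncomputable def creationOp (f : ℝ → ℂ) : ℝ → ℂ := (fun x : ℝ => x • f x) - deriv f

theorem FT_creationOp_of_FT_eq_smul {f : ℝ → ℂ} {c : ℂ} (hf : Integrable f)
    (hxf : Integrable fun x : ℝ => x • f x) (hdf : Differentiable ℝ f)
    (hf' : Integrable (deriv f)) (hFT : FT f = c • f) :
    FT (creationOp f) = (-I * c) • creationOp f := by
  ext ξ
  have hFT_mul : FT (fun x : ℝ => x • f x) ξ = I * c * deriv f ξ := by
    have h := (hdf ξ).hasDerivAt.const_smul c
    rw [← hFT, smul_eq_mul] at h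
    linear_combination
      -I * h.unique (hasDerivAt_FT hf hxf ξ) + FT (fun x : ℝ => x • f x) ξ * I_mul_I
  have hFT_deriv : FT (deriv f) ξ = I * ξ * (c * f ξ) := by
    rw [FT_deriv hf hdf hf', hFT, Pi.smul_apply, smul_eq_mul]
  rw [creationOp, FT_sub hxf hf', Pi.sub_apply, hFT_mul, hFT_deriv]
  simp only [Pi.smul_apply, Pi.sub_apply, smul_eq_mul, real_smul]
  ring

noncomputable def physHermite : ℕ → ℝ[X]
  | 0 => 1
  | n + 1 => 2 * X * physHermite n - derivative (physHermite n)

lemma iteratedDeriv_exp_neg_sq (n : ℕ) (x : ℝ) :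
    iteratedDeriv n (fun t => Real.exp (-t ^ 2)) x
      = (-1) ^ n * (physHermite n).eval x * Real.exp (-x ^ 2) := by
  induction n generalizing x with
  | zero => simp [physHermite]
  | succ n ih =>
    have hgauss : HasDerivAt (fun t : ℝ => Real.exp (-t ^ 2)) (-(2 * x) * Real.exp (-x ^ 2)) x := by
      simpa [mul_comm] using ((hasDerivAt_pow 2 x).neg).exp
    have h : HasDerivAt (fun y => (-1) ^ n * ((physHermite n).eval y * Real.exp (-y ^ 2)))
        ((-1) ^ n * ((derivative (physHermite n)).eval x * Real.exp (-x ^ 2)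
          + (physHermite n).eval x * (-(2 * x) * Real.exp (-x ^ 2)))) x :=
      (((physHermite n).hasDerivAt x).mul hgauss).const_mul _
    rw [iteratedDeriv_succ, show iteratedDeriv n (fun t => Real.exp (-t ^ 2))
      = fun y => (-1) ^ n * ((physHermite n).eval y * Real.exp (-y ^ 2)) from
        funext fun y => by rw [ih]; ring, h.deriv]
    simp only [physHermite, eval_sub, eval_mul, eval_ofNat, eval_X, pow_succ]
    ring

noncomputable def polyGauss (p : ℝ[X]) (x : ℝ) : ℂ := ((p.eval x * Real.exp (-x ^ 2 / 2) : ℝ) : ℂ)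

lemma hermiteFn_eq_smul_polyGauss (n : ℕ) :
    (fun x => (hermiteFn n x : ℂ))
      = (((2 ^ n * n.factorial * √π) ^ (-(1:ℝ)/2) : ℝ) : ℂ) • polyGauss (physHermite n) := by
  ext x
  have hexp : Real.exp (x ^ 2) * Real.exp (-x ^ 2) = 1 := by rw [← Real.exp_add]; simp
  have hsign : ((-1 : ℝ) ^ n) * (-1) ^ n = 1 := by rw [← mul_pow]; norm_num
  rw [hermiteFn, iteratedDeriv_exp_neg_sq, Pi.smul_apply, polyGauss, smul_eq_mul, ← ofReal_mul]
  congr 1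
  linear_combination (2 ^ n * (n.factorial : ℝ) * √π) ^ (-(1:ℝ)/2) * Real.exp (-x ^ 2 / 2)
    * (physHermite n).eval x * (Real.exp (x ^ 2) * Real.exp (-x ^ 2) * hsign + hexp)

lemma polyGauss_sub (p q : ℝ[X]) : polyGauss (p - q) = polyGauss p - polyGauss q := by
  ext x
  simp only [polyGauss, eval_sub, Pi.sub_apply]
  push_cast
  ring

lemma polyGauss_X_mul (p : ℝ[X]) : polyGauss (X * p) = fun x : ℝ => x • polyGauss p x := by
  ext x
  simp only [polyGauss, eval_mul, eval_X, real_smul]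
  push_cast
  ring

lemma hasDerivAt_polyGauss (p : ℝ[X]) (x : ℝ) :
    HasDerivAt (polyGauss p) (polyGauss (derivative p - X * p) x) x := by
  have hsq : HasDerivAt (fun t : ℝ => -t ^ 2 / 2) (-x) x :=
    ((hasDerivAt_pow 2 x).fun_neg.div_const 2).congr_deriv (by push_cast; ring)
  refine (((p.hasDerivAt x).fun_mul hsq.exp).ofReal_comp).congr_deriv ?_
  simp only [polyGauss, eval_sub, eval_mul, eval_X]
  push_cast
  ring

lemma deriv_polyGauss (p : ℝ[X]) : deriv (polyGauss p) = polyGauss (derivative p - X * p) :=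
  funext fun x => (hasDerivAt_polyGauss p x).deriv

lemma integrable_polyGauss (p : ℝ[X]) : Integrable (polyGauss p) := by
  suffices Integrable fun x => p.eval x * Real.exp (-x ^ 2 / 2) from this.ofReal
  induction p using Polynomial.induction_on' with
  | add p q hp hq => simpa only [eval_add, add_mul] using hp.fun_add hq
  | monomial m a =>
    have h := (integrable_rpow_mul_exp_neg_mul_sq (b := 1 / 2) (by norm_num)
      (s := m) (by linarith [m.cast_nonneg (α := ℝ)])).const_mul a
    refine h.congr (ae_of_all _ fun x => ?_)
    simp only [eval_monomial, Real.rpow_natCast]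
    ring_nf

lemma polyGauss_physHermite_succ (n : ℕ) :
    polyGauss (physHermite (n + 1)) = creationOp (polyGauss (physHermite n)) := by
  rw [creationOp, deriv_polyGauss, ← polyGauss_X_mul, ← polyGauss_sub, physHermite]
  congr 1
  ring

theorem FT_polyGauss_physHermite (n : ℕ) :
    FT (polyGauss (physHermite n)) = (-I) ^ n • polyGauss (physHermite n) := by
  induction n with
  | zero =>
    have hgauss : polyGauss (physHermite 0) = fun x => ((Real.exp (-x ^ 2 / 2) : ℝ) : ℂ) := by
      ext x
      simp [physHermite, polyGauss]
    rw [hgauss, FT_gaussian, pow_zero, one_smul]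
  | succ n ih =>
    rw [polyGauss_physHermite_succ, FT_creationOp_of_FT_eq_smul (integrable_polyGauss _)
      (by rw [← polyGauss_X_mul]; exact integrable_polyGauss _)
      (fun x => (hasDerivAt_polyGauss _ x).differentiableAt)
      (by rw [deriv_polyGauss]; exact integrable_polyGauss _) ih, pow_succ']

theorem stmt3 (n : ℕ) (ξ : ℝ) :
    FT (fun x => (hermiteFn n x : ℂ)) ξ = (-Complex.I) ^ n * (hermiteFn n ξ : ℂ) := by
  have hfun := hermiteFn_eq_smul_polyGauss n
  rw [show (hermiteFn n ξ : ℂ) = _ from congrFun hfun ξ, hfun, FT_smul, FT_polyGauss_physHermite]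
  simp only [Pi.smul_apply, smul_eq_mul]
  ring
end

section
/- Let $\omega$ be a weight function and $\overline{C} > 0$. Then there exists $C < \infty$ such that for all real $y \ge 2$, $\sum_{n \ge y} e^{-\overline{C}\omega(\sqrt{n})} \le C e^{-\overline{C}\omega(\sqrt{y})/2}$. -/
open MeasureTheory Real Filter Asymptotics

/-! The weight grows faster than any multiple of `log`, so `exp (-c ω (√n)) ≤ n⁻²` for large `n`
and the series `∑ exp (-c ω (√n))` converges for every `c > 0`. For `n ≥ y`, monotonicity splits
`exp (-Cb ω (√n))` into `exp (-Cb ω (√y) / 2) · exp (-Cb ω (√n) / 2)`, and the second factor sums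
to a constant. -/

lemma eventually_log_le_mul_of_isLittleO {ω : ℝ → ℝ} (hlog : (fun t => Real.log t) =o[atTop] ω)
    (hpos : ∀ x, 0 ≤ ω x) {c : ℝ} (hc : 0 < c) : ∀ᶠ t in atTop, Real.log t ≤ c * ω t := by
  filter_upwards [hlog.bound hc] with t ht
  rw [Real.norm_of_nonneg (hpos t)] at ht
  exact (le_abs_self _).trans ht

lemma summable_exp_neg_mul_comp_sqrt {ω : ℝ → ℝ} (hlog : (fun t => Real.log t) =o[atTop] ω)
    (hpos : ∀ x, 0 ≤ ω x) {c : ℝ} (hc : 0 < c) :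
    Summable fun n : ℕ => Real.exp (-(c * ω (Real.sqrt n))) := by
  have hlog_sqrt : ∀ᶠ n : ℕ in atTop, Real.log (Real.sqrt n) ≤ c / 4 * ω (Real.sqrt n) :=
    (tendsto_sqrt_atTop.comp tendsto_natCast_atTop_atTop).eventually
      (eventually_log_le_mul_of_isLittleO hlog hpos (by positivity))
  refine Summable.of_norm_bounded_eventually_nat
    (Real.summable_one_div_nat_pow.2 one_lt_two) ?_
  filter_upwards [hlog_sqrt, eventually_ge_atTop 1] with n hn hn1
  have hn0 : (0 : ℝ) < n := by exact_mod_cast hn1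
  rw [Real.log_sqrt hn0.le] at hn
  calc ‖Real.exp (-(c * ω (Real.sqrt n)))‖ ≤ Real.exp (-(2 * Real.log n)) := by
        rw [Real.norm_of_nonneg (Real.exp_pos _).le, Real.exp_le_exp]
        linarith
    _ = 1 / (n : ℝ) ^ 2 := by
        rw [Real.exp_neg, mul_comm, ← Real.rpow_def_of_pos hn0, Real.rpow_two, one_div]

lemma tsum_exp_neg_subtype_le {h : ℝ → ℝ} (hh : Monotone h)
    (hsum : Summable fun n : ℕ => Real.exp (-h n / 2)) (y : ℝ) :
    ∑' n : {n : ℕ // y ≤ (n : ℝ)}, Real.exp (-h n) ≤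
      (∑' n : ℕ, Real.exp (-h n / 2)) * Real.exp (-h y / 2) := by
  have hsplit : ∀ n : {n : ℕ // y ≤ (n : ℝ)},
      Real.exp (-h n) ≤ Real.exp (-h y / 2) * Real.exp (-h n / 2) := by
    rintro ⟨n, hn⟩
    rw [← Real.exp_add, Real.exp_le_exp]
    linarith [hh hn]
  have hsum_sub := (hsum.subtype {n : ℕ | y ≤ (n : ℝ)}).mul_left (Real.exp (-h y / 2))
  calc ∑' n : {n : ℕ // y ≤ (n : ℝ)}, Real.exp (-h n)
      ≤ ∑' n : {n : ℕ // y ≤ (n : ℝ)}, Real.exp (-h y / 2) * Real.exp (-h n / 2) :=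
        (hsum_sub.of_nonneg_of_le (fun _ => (Real.exp_pos _).le) hsplit).tsum_le_tsum hsplit hsum_sub
    _ = Real.exp (-h y / 2) * ∑' n : {n : ℕ // y ≤ (n : ℝ)}, Real.exp (-h n / 2) := tsum_mul_left
    _ ≤ Real.exp (-h y / 2) * ∑' n : ℕ, Real.exp (-h n / 2) := by
        gcongr
        exact hsum.tsum_subtype_le _ _ fun _ => (Real.exp_pos _).le
    _ = (∑' n : ℕ, Real.exp (-h n / 2)) * Real.exp (-h y / 2) := mul_comm _ _

theorem stmt11_general (ω : ℝ → ℝ) (hm : Monotone ω) (hpos : ∀ x, 0 ≤ ω x)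
    (hlog : (fun t => Real.log t) =o[atTop] ω)
    (Cb : ℝ) (hCb : 0 < Cb) :
    ∃ C : ℝ, ∀ y : ℝ, 2 ≤ y →
      ∑' n : {n : ℕ // y ≤ (n : ℝ)}, Real.exp (-(Cb * ω (Real.sqrt (n.1 : ℝ)))) ≤
        C * Real.exp (-(Cb * ω (Real.sqrt y)) / 2) := by
  have hmono : Monotone fun t => Cb * ω (Real.sqrt t) :=
    fun _ _ hst => mul_le_mul_of_nonneg_left (hm (Real.sqrt_le_sqrt hst)) hCb.le
  have hsum : Summable fun n : ℕ => Real.exp (-(Cb * ω (Real.sqrt n)) / 2) :=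
    (summable_exp_neg_mul_comp_sqrt hlog hpos (half_pos hCb)).congr fun n => by ring_nf
  exact ⟨_, fun y _ => tsum_exp_neg_subtype_le hmono hsum y⟩

theorem stmt11 (ω : ℝ → ℝ) (hc : Continuous ω) (hm : Monotone ω) (hpos : ∀ x, 0 ≤ ω x)
    (hconv : ConvexOn ℝ Set.univ fun t => ω (Real.exp t))
    (hlog : (fun t => Real.log t) =o[atTop] ω)
    (hdoub : ∃ Cd : ℝ, ∀ᶠ t in atTop, ω (2 * t) ≤ Cd * ω t)
    (Cb : ℝ) (hCb : 0 < Cb) :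
    ∃ C : ℝ, ∀ y : ℝ, 2 ≤ y →
      ∑' n : {n : ℕ // y ≤ (n : ℝ)}, Real.exp (-(Cb * ω (Real.sqrt (n.1 : ℝ)))) ≤
        C * Real.exp (-(Cb * ω (Real.sqrt y)) / 2) :=
  stmt11_general ω hm hpos hlog Cb hCb
end
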